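/- For all natural numbers n and m with m ≤ n, the fermionic Stirling numbers satisfy the inversion (orthogonality) relations Σ_{j=m}^{n} s_f(n,j) S_f(j,m) = δ_{n,m} and Σ_{j=m}^{n} S_f(n,j) s_f(j,m) = δ_{n,m}, where δ_{n,m} is the Kronecker delta. -/

import Mathlib

open Finset

/-- `ε_n = (1 - (-1)^n)/2`, so `ε_n = 0` for even `n` and `ε_n = 1` for odd `n`. -/
def eps (n : ℕ) : ℤ := (1 - (-1 : ℤ) ^ n) / 2

/-- The fermionic Stirling numbers of the first kind, defined by the recurrence
`s_f(n+1,k) = (-1)^n s_f(n,k-1) + (-1)^{n+1} ε_n s_f(n,k)`, with `s_f(0,0) = 1`,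
`s_f(n,0) = 0` for `n ≥ 1`, and `s_f(n,k) = 0` for `k > n`. -/
def sf : ℕ → ℕ → ℤ
  | 0, 0 => 1
  | 0, _ + 1 => 0
  | _ + 1, 0 => 0
  | n + 1, k + 1 => (-1 : ℤ) ^ n * sf n k + (-1 : ℤ) ^ (n + 1) * eps n * sf n (k + 1)

/-- The fermionic Stirling numbers of the second kind, defined by the recurrence
`S_f(n+1,k) = (-1)^{k-1} S_f(n,k-1) + ε_k S_f(n,k)`, with `S_f(0,0) = 1`,
`S_f(n,0) = 0` for `n ≥ 1`, and `S_f(n,k) = 0` for `k > n`. -/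
def Sf : ℕ → ℕ → ℤ
  | 0, 0 => 1
  | 0, _ + 1 => 0
  | _ + 1, 0 => 0
  | n + 1, k + 1 => (-1 : ℤ) ^ k * Sf n k + eps (k + 1) * Sf n (k + 1)

/-! The polynomials `φ_n = ∏_{i<n} (-1)^i (X - ε_i)` have coefficients `s_f(n,k)`, and
`X φ_k = (-1)^k φ_{k+1} + ε_k φ_k` turns the recurrence of `S_f` into `X^n = ∑_k S_f(n,k) φ_k`.
Comparing coefficients of `X^m` shows that the lower-triangular arrays satisfy `S_f s_f = 1`;
on each finite leading block a one-sided inverse is two-sided, whence also `s_f S_f = 1`. -/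

section LowerTriangular

variable {R : Type*}

def IsLowerTriangular [Zero R] (a : ℕ → ℕ → R) : Prop :=
  ∀ ⦃n k⦄, n < k → a n k = 0

def leadingBlock (a : ℕ → ℕ → R) (N : ℕ) : Matrix (Fin N) (Fin N) R :=
  Matrix.of fun i j => a i j

variable {a b : ℕ → ℕ → R}

theorem IsLowerTriangular.sum_Icc_mul_eq_sum_range [Semiring R] (hb : IsLowerTriangular b)
    (n m : ℕ) :
    ∑ j ∈ Icc m n, a n j * b j m = ∑ j ∈ range (n + 1), a n j * b j m := by
  refine sum_subset (fun j hj => ?_) fun j hj hj' => ?_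
  · simp only [mem_Icc, mem_range] at hj ⊢; omega
  · simp only [mem_Icc, mem_range, not_and, not_le] at hj hj'
    rw [hb (by omega), mul_zero]

theorem IsLowerTriangular.leadingBlock_mul_apply [Semiring R] (ha : IsLowerTriangular a)
    (b : ℕ → ℕ → R) {N : ℕ} (i k : Fin (N + 1)) :
    (leadingBlock a (N + 1) * leadingBlock b (N + 1)) i k =
      ∑ j ∈ range (i + 1), a i j * b j k := by
  rw [Matrix.mul_apply]
  refine (Fin.sum_univ_eq_sum_range (fun j => a i j * b j k) (N + 1)).trans ?_
  refine (sum_subset (range_subset_range.mpr (by omega)) fun j _ hj => ?_).symm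
  rw [ha (by simpa using hj), zero_mul]

theorem IsLowerTriangular.sum_range_mul_eq_ite_comm [CommRing R] (ha : IsLowerTriangular a)
    (hb : IsLowerTriangular b)
    (hab : ∀ n m, ∑ j ∈ range (n + 1), a n j * b j m = if n = m then 1 else 0) (n m : ℕ) :
    ∑ j ∈ range (n + 1), b n j * a j m = if n = m then 1 else 0 := by
  have hAB : leadingBlock a (n + m + 1) * leadingBlock b (n + m + 1) = 1 := by
    ext i k
    simp [ha.leadingBlock_mul_apply, hab, Matrix.one_apply, Fin.val_inj]
  have hBA : leadingBlock b (n + m + 1) * leadingBlock a (n + m + 1) = 1 :=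
    mul_eq_one_comm.mp hAB
  have h := congrFun₂ hBA ⟨n, by omega⟩ ⟨m, by omega⟩
  simpa [hb.leadingBlock_mul_apply, Matrix.one_apply] using h

end LowerTriangular

open Polynomial

theorem isLowerTriangular_sf : IsLowerTriangular sf := by
  intro n k h
  induction n generalizing k with
  | zero => obtain ⟨k, rfl⟩ := Nat.exists_eq_succ_of_ne_zero (by omega : k ≠ 0); rfl
  | succ n ih =>
    obtain ⟨k, rfl⟩ := Nat.exists_eq_succ_of_ne_zero (by omega : k ≠ 0)
    simp [sf, ih (by omega : n < k), ih (by omega : n < k + 1)]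

theorem isLowerTriangular_Sf : IsLowerTriangular Sf := by
  intro n k h
  induction n generalizing k with
  | zero => obtain ⟨k, rfl⟩ := Nat.exists_eq_succ_of_ne_zero (by omega : k ≠ 0); rfl
  | succ n ih =>
    obtain ⟨k, rfl⟩ := Nat.exists_eq_succ_of_ne_zero (by omega : k ≠ 0)
    simp [Sf, ih (by omega : n < k), ih (by omega : n < k + 1)]

theorem eps_zero : eps 0 = 0 := rfl

noncomputable def fermionicFallingFactorial (n : ℕ) : ℤ[X] :=
  ∏ i ∈ range n, C ((-1) ^ i) * (X - C (eps i))

theorem fermionicFallingFactorial_succ (n : ℕ) :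
    fermionicFallingFactorial (n + 1) =
      C ((-1) ^ n) * (X - C (eps n)) * fermionicFallingFactorial n := by
  rw [fermionicFallingFactorial, prod_range_succ, mul_comm]; rfl

theorem coeff_fermionicFallingFactorial (n k : ℕ) :
    (fermionicFallingFactorial n).coeff k = sf n k := by
  induction n generalizing k with
  | zero => cases k <;> simp [fermionicFallingFactorial, coeff_one, sf]
  | succ n ih =>
    have hexpand : fermionicFallingFactorial (n + 1) =
        C ((-1) ^ n) * (X * fermionicFallingFactorial n) -
          C ((-1) ^ n * eps n) * fermionicFallingFactorial n := by
      rw [fermionicFallingFactorial_succ, C_mul]; ring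
    rw [hexpand, coeff_sub, coeff_C_mul, coeff_C_mul, ih]
    cases k with
    | zero => cases n <;> simp [sf, eps_zero]
    | succ k => rw [coeff_X_mul, ih, sf]; ring

theorem X_mul_fermionicFallingFactorial (k : ℕ) :
    X * fermionicFallingFactorial k =
      C ((-1) ^ k) * fermionicFallingFactorial (k + 1) +
        C (eps k) * fermionicFallingFactorial k := by
  have hsq : C ((-1 : ℤ) ^ k) * C ((-1) ^ k) = 1 := by
    rw [← C_mul, ← mul_pow]; simp
  rw [fermionicFallingFactorial_succ]
  linear_combination (-(X - C (eps k)) * fermionicFallingFactorial k) * hsq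

theorem X_pow_eq_sum_Sf_mul_fermionicFallingFactorial (n : ℕ) :
    (X : ℤ[X]) ^ n = ∑ k ∈ range (n + 1), C (Sf n k) * fermionicFallingFactorial k := by
  induction n with
  | zero => simp [Sf, fermionicFallingFactorial]
  | succ n ih =>
    have hshift : ∑ k ∈ range (n + 1),
          C (Sf n (k + 1)) * (C (eps (k + 1)) * fermionicFallingFactorial (k + 1)) =
        ∑ k ∈ range (n + 1), C (Sf n k) * (C (eps k) * fermionicFallingFactorial k) := by
      have h := sum_range_succ'
        (fun k => C (Sf n k) * (C (eps k) * fermionicFallingFactorial k)) (n + 1)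
      rw [sum_range_succ, isLowerTriangular_Sf (Nat.lt_succ_self n)] at h
      simpa [eps_zero] using h.symm
    rw [pow_succ', ih, mul_sum]
    simp only [mul_left_comm X, X_mul_fermionicFallingFactorial, mul_add, sum_add_distrib]
    rw [← hshift, ← sum_add_distrib, sum_range_succ' (fun k => C (Sf (n + 1) k) * _)]
    simp only [Sf, map_zero, zero_mul, add_zero]
    refine sum_congr rfl fun k _ => ?_
    rw [C_add, C_mul, C_mul]
    ring

theorem sum_Sf_mul_sf (n m : ℕ) :
    ∑ j ∈ range (n + 1), Sf n j * sf j m = if n = m then 1 else 0 := by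
  have h := congrArg (coeff · m) (X_pow_eq_sum_Sf_mul_fermionicFallingFactorial n)
  simpa [coeff_X_pow, finsetSum_coeff, coeff_C_mul, coeff_fermionicFallingFactorial, eq_comm]
    using h.symm

theorem fermionic_stirling_orthogonality_general (n m : ℕ) :
    (∑ j ∈ Finset.Icc m n, sf n j * Sf j m) = (if n = m then (1 : ℤ) else 0) ∧
    (∑ j ∈ Finset.Icc m n, Sf n j * sf j m) = (if n = m then (1 : ℤ) else 0) := by
  rw [isLowerTriangular_Sf.sum_Icc_mul_eq_sum_range, isLowerTriangular_sf.sum_Icc_mul_eq_sum_range]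
  exact ⟨isLowerTriangular_Sf.sum_range_mul_eq_ite_comm isLowerTriangular_sf sum_Sf_mul_sf n m,
    sum_Sf_mul_sf n m⟩

theorem fermionic_stirling_orthogonality (n m : ℕ) (hmn : m ≤ n) :
    (∑ j ∈ Finset.Icc m n, sf n j * Sf j m) = (if n = m then (1 : ℤ) else 0) ∧
    (∑ j ∈ Finset.Icc m n, Sf n j * sf j m) = (if n = m then (1 : ℤ) else 0) :=
  fermionic_stirling_orthogonality_general n m
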